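/- arXiv:1805.09280 — 2 statements merged into one kernel-verified Lean document; each statement's English description precedes it below -/
import Mathlib

section
/- Theorem 3.3 (algebraic formula for Model 3, substitution form): For every (i,j,k) ∈ ℤ³, one has Z₃(i,j,k) = X'_{r(i,j,k)} · (A')^{α(i,j,k)} (B')^{β(i,j,k)} (C')^{γ(i,j,k)} (D')^{δ(i,j,k)} (E')^{ε(i,j,k)} in F; that is, the Model 3 closed formula Z₃(i,j,k) equals the Model 1 closed formula of Theorem 3.1 with x₁ replaced throughout by Y₁' = (x₁x₂x₆+x₃x₆²+x₃x₄x₅)/(x₁x₄), x₄ replaced throughout by Y₄' = (x₁x₂+x₃x₆)/x₄, and x₂,x₃,x₅,x₆ left unchanged. -/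
noncomputable section

open MvPolynomial

abbrev F : Type := FractionRing (MvPolynomial (Fin 6) ℚ)

/-- The images of the six indeterminates in the field `F = ℚ(x₁,…,x₆)`. -/
def xv (t : Fin 6) : F := algebraMap (MvPolynomial (Fin 6) ℚ) F (X t)

def x1 : F := xv 0
def x2 : F := xv 1
def x3 : F := xv 2
def x4 : F := xv 3
def x5 : F := xv 4
def x6 : F := xv 5

/-- Chooses among six field elements according to the residue of `2(i-j)+3k` mod 6:
residues 5,2,4,1,3,0 select the 1st,…,6th element respectively. -/
def pick (v1 v2 v3 v4 v5 v6 : F) (i j k : ℤ) : F :=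
  if (2*(i-j)+3*k) % 6 = 5 then v1
  else if (2*(i-j)+3*k) % 6 = 2 then v2
  else if (2*(i-j)+3*k) % 6 = 4 then v3
  else if (2*(i-j)+3*k) % 6 = 1 then v4
  else if (2*(i-j)+3*k) % 6 = 3 then v5
  else v6

/-- α(i,j,k) = ⌊(P+i+2j)/3⌋ with P = i²+ij+j²+1. -/
def expA (i j : ℤ) : ℤ := Int.fdiv ((i^2+i*j+j^2+1) + i + 2*j) 3
/-- β(i,j,k) = ⌊(P+2i+j)/3⌋. -/
def expB (i j : ℤ) : ℤ := Int.fdiv ((i^2+i*j+j^2+1) + 2*i + j) 3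
/-- γ(i,j,k) = ⌊P/3⌋. -/
def expC (i j : ℤ) : ℤ := Int.fdiv (i^2+i*j+j^2+1) 3
/-- δ(i,j,k) = ⌊(k−1)²/4⌋. -/
def expD (k : ℤ) : ℤ := Int.fdiv ((k-1)^2) 4
/-- ε(i,j,k) = ⌊k²/4⌋. -/
def expE (k : ℤ) : ℤ := Int.fdiv (k^2) 4

def Y1' : F := (x1*x2*x6 + x3*x6^2 + x3*x4*x5) / (x1*x4)
def Y4' : F := (x1*x2 + x3*x6) / x4

def A3 : F := x1 / x2
def B3 : F := (x4*x5 + x6^2) / (x1*x3)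
def C3 : F := (x1^2*x2^2 + 2*x1*x2*x3*x6 + x3^2*x6^2 + x3^2*x4*x5) / (x1*x4*x5*x6)
def D3 : F := x4 / x5
def E3 : F := (x1^2*x2^2*x6^2 + 2*x1*x2*x3*x6^3 + x3^2*x6^4 + x1^2*x2^2*x4*x5
    + 3*x1*x2*x3*x4*x5*x6 + 2*x3^2*x4*x5*x6^2 + x3^2*x4^2*x5^2) / (x1*x2*x3*x4^2*x6)

/-- The Model 3 closed formula Z₃(i,j,k) of Theorem 3.3. -/
def Z3 (i j k : ℤ) : F :=
  pick Y1' x2 x3 Y4' x5 x6 i j k *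
    A3 ^ expA i j * B3 ^ expB i j * C3 ^ expC i j * D3 ^ expD k * E3 ^ expE k

-- The Model 1 coefficients of Theorem 3.1 with x₁ ↦ Y₁', x₄ ↦ Y₄'.
def A' : F := (x3*x5 + Y4'*x6) / (Y1'*x2)
def B' : F := (Y1'*x6 + x2*x5) / (x3*Y4')
def C' : F := (Y1'*x3 + x2*Y4') / (x5*x6)
def D' : F := (Y1'*x3*x6 + x2*x3*x5 + x2*Y4'*x6) / (Y1'*Y4'*x5)
def E' : F := (x2*Y4'*x5 + Y1'*x3*x5 + Y1'*Y4'*x6) / (x2*x3*x6)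

/-!
The substituted variables satisfy the two exchange relations
`x₄ Y₄' = x₁x₂ + x₃x₆` and `x₁ Y₁' = x₃x₅ + x₆ Y₄'`. Clearing denominators, each Model 3
coefficient `A₃, …, E₃` agrees with its substituted Model 1 counterpart `A', …, E'` modulo these
two relations, so the two closed formulas coincide factor by factor.
-/

theorem algebraMap_ne_zero_of_eval_ne_zero {σ R K : Type*} [CommRing R] [CommRing K]
    [Algebra (MvPolynomial σ R) K] [IsFractionRing (MvPolynomial σ R) K]
    {p : MvPolynomial σ R} (x : σ → R) (h : eval x p ≠ 0) :
    algebraMap (MvPolynomial σ R) K p ≠ 0 :=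
  (map_ne_zero_iff _ (IsFractionRing.injective _ K)).mpr fun hp ↦ h (by rw [hp, map_zero])

theorem xv_ne_zero (t : Fin 6) : xv t ≠ 0 :=
  algebraMap_ne_zero_of_eval_ne_zero (fun _ ↦ 1) (by simp)

@[simp] theorem x1_ne_zero : x1 ≠ 0 := xv_ne_zero 0
@[simp] theorem x2_ne_zero : x2 ≠ 0 := xv_ne_zero 1
@[simp] theorem x3_ne_zero : x3 ≠ 0 := xv_ne_zero 2
@[simp] theorem x4_ne_zero : x4 ≠ 0 := xv_ne_zero 3
@[simp] theorem x5_ne_zero : x5 ≠ 0 := xv_ne_zero 4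
@[simp] theorem x6_ne_zero : x6 ≠ 0 := xv_ne_zero 5

theorem x4_mul_Y4' : x4 * Y4' = x1*x2 + x3*x6 :=
  mul_div_cancel₀ _ x4_ne_zero

theorem x1_mul_Y1' : x1 * Y1' = x3*x5 + x6*Y4' := by
  unfold Y1' Y4'
  field_simp
  ring

@[simp] theorem Y1'_ne_zero : Y1' ≠ 0 := by
  have hnum : x1*x2*x6 + x3*x6^2 + x3*x4*x5 =
      algebraMap (MvPolynomial (Fin 6) ℚ) F (X 0 * X 1 * X 5 + X 2 * X 5 ^ 2 + X 2 * X 3 * X 4) := by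
    simp [x1, x2, x3, x4, x5, x6, xv]
  refine div_ne_zero ?_ (by simp)
  rw [hnum]
  exact algebraMap_ne_zero_of_eval_ne_zero (fun _ ↦ 1) (by norm_num)

@[simp] theorem Y4'_ne_zero : Y4' ≠ 0 := by
  have hnum : x1*x2 + x3*x6 = algebraMap (MvPolynomial (Fin 6) ℚ) F (X 0 * X 1 + X 2 * X 5) := by
    simp [x1, x2, x3, x6, xv]
  refine div_ne_zero ?_ (by simp)
  rw [hnum]
  exact algebraMap_ne_zero_of_eval_ne_zero (fun _ ↦ 1) (by norm_num)

theorem A3_eq_A' : A3 = A' := by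
  rw [A3, A', div_eq_div_iff (by simp) (by simp)]
  linear_combination x2 * x1_mul_Y1'

theorem B3_eq_B' : B3 = B' := by
  rw [B3, B', div_eq_div_iff (by simp) (by simp)]
  linear_combination x3 * x5 * x4_mul_Y4' - x3 * x6 * x1_mul_Y1'

theorem C3_eq_C' : C3 = C' := by
  rw [C3, C', div_eq_div_iff (by simp) (by simp)]
  linear_combination -x5 * x6 * (x1*x2 + x3*x6) * x4_mul_Y4' - x3 * x4 * x5 * x6 * x1_mul_Y1'

theorem D3_eq_D' : D3 = D' := by
  rw [D3, D', div_eq_div_iff (by simp) (by simp)]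
  linear_combination x5 * Y1' * x4_mul_Y4' + x2 * x5 * x1_mul_Y1'

theorem E3_eq_E' : E3 = E' := by
  rw [E3, E', div_eq_div_iff (by simp) (by simp)]
  linear_combination
    -x2 * x3 * x6 * (x6^2 * (x1*x2 + x3*x6 + x4*Y4') + x4 * x5 * (x1*x2 + 2*x3*x6)) * x4_mul_Y4'
      - x2 * x3 * x6 * x4^2 * (x3*x5 + x6*Y4') * x1_mul_Y1'

/-- Theorem 3.3 (algebraic formula for Model 3, substitution form). -/
theorem model3_substitution_form (i j k : ℤ) :
    Z3 i j k =
      pick Y1' x2 x3 Y4' x5 x6 i j k *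
        A' ^ expA i j * B' ^ expB i j * C' ^ expC i j * D' ^ expD k * E' ^ expE k := by
  rw [Z3, A3_eq_A', B3_eq_B', C3_eq_C', D3_eq_D', E3_eq_E']
end
end

section
/- Closed forms for the Kenyon–Pemantle integer sequences (Remark 8.2): Suppose 𝐀, 𝐁 : ℕ → ℚ satisfy 𝐀(0) = 𝐀(1) = 𝐀(2) = 𝐁(0) = 1 and, for every n ≥ 1, the (denominator-cleared) recurrences 𝐁(n)·𝐀(n−1)·𝐁(n−1) = 𝐀(n)³ + 𝐀(n−1)𝐀(n)𝐀(n+1) + 𝐁(n−1)³ and 𝐀(n+2)·𝐀(n−1)²·𝐁(n−1)³ = 𝐁(n−1)⁶ + 2𝐀(n)³𝐁(n−1)³ + 3𝐀(n−1)𝐀(n)𝐀(n+1)𝐁(n−1)³ + (𝐀(n−1)𝐀(n+1) + 𝐀(n)²)³. Then for every N ≥ 0: 𝐀(2N+1) = 14^{N²}, 𝐀(2N+2) = 14^{N(N+1)}, 𝐁(2N) = 14^{N²}, and 𝐁(2N+1) = 3·14^{N(N+1)}. In particular 𝐀(2N+1) = 𝐁(2N) for all N ≥ 0, and all values 𝐀(n),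 𝐁(n) are positive integers. -/
/-!
The data `(A n, A (n+1), A (n+2), B n)` alternate between the shapes `(x, x t, x t², x t)` and
`(y, y s, 14 y s², 3 y s)`: by homogeneity of the recurrence, one step takes the first shape with
parameters `(x, t)` to the second with `(x t, t)`, and the second with `(y, s)` to the first with
`(y s, 14 s)`. Starting from `(1, 1, 1, 1)` at `n = 0`, the index `2 N + 1` carries
`y = 14 ^ N²` and `s = 14 ^ N`.
-/

namespace KenyonPemantle

variable {K : Type*} [Field K]

/-- The recurrences of the statement, reindexed by `n ↦ n + 1`. -/
structure IsSolution (A B : ℕ → K) : Prop where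
  rec_B : ∀ n, B (n+1) * A n * B n = A (n+1) ^ 3 + A n * A (n+1) * A (n+2) + B n ^ 3
  rec_A : ∀ n, A (n+3) * A n ^ 2 * B n ^ 3 =
    B n ^ 6 + 2 * A (n+1) ^ 3 * B n ^ 3 + 3 * A n * A (n+1) * A (n+2) * B n ^ 3
      + (A n * A (n+2) + A (n+1) ^ 2) ^ 3

def EvenProfile (A B : ℕ → K) (n : ℕ) (x t : K) : Prop :=
  A n = x ∧ A (n+1) = x * t ∧ A (n+2) = x * t ^ 2 ∧ B n = x * t

def OddProfile (A B : ℕ → K) (n : ℕ) (y s : K) : Prop :=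
  A n = y ∧ A (n+1) = y * s ∧ A (n+2) = 14 * y * s ^ 2 ∧ B n = 3 * y * s

variable {A B : ℕ → K} {n : ℕ}

theorem EvenProfile.oddProfile_succ (hAB : IsSolution A B) {x t : K} (hx : x ≠ 0) (ht : t ≠ 0)
    (h : EvenProfile A B n x t) : OddProfile A B (n+1) (x * t) t := by
  obtain ⟨h0, h1, h2, hb⟩ := h
  have hB := hAB.rec_B n
  have hA := hAB.rec_A n
  rw [h0, h1, h2, hb] at hB hA
  refine ⟨h1, by rw [h2]; ring, ?_, ?_⟩
  · apply mul_right_cancel₀ (b := x ^ 2 * (x * t) ^ 3) (by positivity)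
    linear_combination hA
  · apply mul_right_cancel₀ (b := x * (x * t)) (by positivity)
    linear_combination hB

theorem OddProfile.evenProfile_succ (hAB : IsSolution A B) (h3 : (3 : K) ≠ 0) {y s : K}
    (hy : y ≠ 0) (hs : s ≠ 0) (h : OddProfile A B n y s) :
    EvenProfile A B (n+1) (y * s) (14 * s) := by
  obtain ⟨h0, h1, h2, hb⟩ := h
  have hB := hAB.rec_B n
  have hA := hAB.rec_A n
  rw [h0, h1, h2, hb] at hB hA
  refine ⟨h1, by rw [h2]; ring, ?_, ?_⟩
  · apply mul_right_cancel₀ (b := y ^ 2 * (3 * y * s) ^ 3) (by simp [*])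
    linear_combination hA
  · apply mul_right_cancel₀ (b := y * (3 * y * s)) (by simp [*])
    linear_combination hB

theorem oddProfile_two_mul_add_one [CharZero K] (hAB : IsSolution A B)
    (hA0 : A 0 = 1) (hA1 : A 1 = 1) (hA2 : A 2 = 1) (hB0 : B 0 = 1) (N : ℕ) :
    OddProfile A B (2 * N + 1) (14 ^ (N ^ 2)) (14 ^ N) := by
  induction N with
  | zero =>
    have h : EvenProfile A B 0 1 1 := by simp [EvenProfile, hA0, hA1, hA2, hB0]
    simpa using h.oddProfile_succ hAB one_ne_zero one_ne_zero
  | succ N ih =>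
    have h := (ih.evenProfile_succ hAB three_ne_zero (by simp) (by simp)).oddProfile_succ
      hAB (by simp) (by simp)
    rwa [show (14 : K) ^ (N ^ 2) * 14 ^ N * (14 * 14 ^ N) = 14 ^ ((N + 1) ^ 2) by ring,
      ← pow_succ'] at h

theorem B_two_mul_eq_A_two_mul_add_one [CharZero K] (hAB : IsSolution A B)
    (hA0 : A 0 = 1) (hA1 : A 1 = 1) (hA2 : A 2 = 1) (hB0 : B 0 = 1) (N : ℕ) :
    B (2 * N) = A (2 * N + 1) := by
  cases N with
  | zero => simp [hA1, hB0]
  | succ N =>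
    have hodd := oddProfile_two_mul_add_one hAB hA0 hA1 hA2 hB0 N
    have h := hodd.evenProfile_succ hAB three_ne_zero (by simp) (by simp)
    exact h.2.2.2.trans h.2.1.symm

end KenyonPemantle

open KenyonPemantle in
/-- Closed forms for the Kenyon–Pemantle integer sequences (Remark 8.2). -/
theorem kenyon_pemantle_closed_forms (A B : ℕ → ℚ)
    (hA0 : A 0 = 1) (hA1 : A 1 = 1) (hA2 : A 2 = 1) (hB0 : B 0 = 1)
    (hB : ∀ n : ℕ, 1 ≤ n →
      B n * A (n-1) * B (n-1) = A n ^ 3 + A (n-1) * A n * A (n+1) + B (n-1) ^ 3)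
    (hA : ∀ n : ℕ, 1 ≤ n →
      A (n+2) * A (n-1) ^ 2 * B (n-1) ^ 3 =
        B (n-1) ^ 6 + 2 * A n ^ 3 * B (n-1) ^ 3
          + 3 * A (n-1) * A n * A (n+1) * B (n-1) ^ 3
          + (A (n-1) * A (n+1) + A n ^ 2) ^ 3) :
    (∀ N : ℕ, A (2*N+1) = 14 ^ (N^2)
      ∧ A (2*N+2) = 14 ^ (N*(N+1))
      ∧ B (2*N) = 14 ^ (N^2)
      ∧ B (2*N+1) = 3 * 14 ^ (N*(N+1)))
    ∧ (∀ N : ℕ, A (2*N+1) = B (2*N))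
    ∧ (∀ n : ℕ, ∃ a : ℕ, 0 < a ∧ A n = a)
    ∧ (∀ n : ℕ, ∃ b : ℕ, 0 < b ∧ B n = b) := by
  have hAB : IsSolution A B := ⟨fun n => hB (n+1) n.succ_pos, fun n => hA (n+1) n.succ_pos⟩
  have hodd := oddProfile_two_mul_add_one hAB hA0 hA1 hA2 hB0
  have heven := B_two_mul_eq_A_two_mul_add_one hAB hA0 hA1 hA2 hB0
  have hpow (N : ℕ) : (14 : ℚ) ^ (N * (N + 1)) = 14 ^ (N ^ 2) * 14 ^ N := by ring
  have closed (N : ℕ) : A (2*N+1) = 14 ^ (N^2) ∧ A (2*N+2) = 14 ^ (N*(N+1))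
      ∧ B (2*N) = 14 ^ (N^2) ∧ B (2*N+1) = 3 * 14 ^ (N*(N+1)) := by
    obtain ⟨h0, h1, -, hb⟩ := hodd N
    exact ⟨h0, by rw [hpow]; exact h1, by rw [heven, h0], by rw [hpow, hb, mul_assoc]⟩
  refine ⟨closed, fun N => (heven N).symm, fun n => ?_, fun n => ?_⟩
  · obtain ⟨k, rfl | rfl⟩ := Nat.even_or_odd' n
    · rcases k with _ | k
      · exact ⟨1, one_pos, by simp [hA0]⟩
      · exact ⟨14 ^ (k * (k + 1)), by positivity, by
        rw [show 2 * (k + 1) = 2 * k + 2 by ring, (closed k).2.1]; push_cast; rfl⟩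
    · exact ⟨14 ^ (k ^ 2), by positivity, by rw [(closed k).1]; push_cast; rfl⟩
  · obtain ⟨k, rfl | rfl⟩ := Nat.even_or_odd' n
    · exact ⟨14 ^ (k ^ 2), by positivity, by rw [(closed k).2.2.1]; push_cast; rfl⟩
    · exact ⟨3 * 14 ^ (k * (k + 1)), by positivity, by rw [(closed k).2.2.2]; push_cast; rfl⟩
end
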